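/- arXiv:2311.11733 — 4 statements merged into one kernel-verified Lean document; each statement's English description precedes it below -/
import Mathlib

section
/- For natural numbers q, d, r with r ≤ d ≤ q, the sum over k from 0 to r of (1/q^k) · C(q,k) · d^k · (e d / q)^{(d-k)/2} is at most e^d · (e d / q)^{(d-r)/2}. -/
open Real Finset

open scoped Nat

lemma one_div_pow_mul_choose_le_inv_factorial (q k : ℕ) :
    1 / (q : ℝ) ^ k * q.choose k ≤ 1 / k ! := by
  calc 1 / (q : ℝ) ^ k * q.choose k ≤ 1 / (q : ℝ) ^ k * ((q : ℝ) ^ k / k !) := by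
        gcongr
        exact Nat.choose_le_pow_div k q
    _ = (q : ℝ) ^ k / (q : ℝ) ^ k * (1 / k !) := by ring
    _ ≤ 1 / k ! := mul_le_of_le_one_left (by positivity) (div_self_le_one _)

lemma one_div_pow_mul_choose_mul_rpow_le {x : ℝ} (hx0 : 0 ≤ x) (hx1 : x ≤ 1) {a t : ℝ}
    (ha : 0 ≤ a) {q k r : ℕ} (hkr : k ≤ r) (hrt : (r : ℝ) ≤ t) :
    1 / (q : ℝ) ^ k * q.choose k * a ^ k * x ^ ((t - k) / 2) ≤
      a ^ k / k ! * x ^ ((t - r) / 2) := by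
  -- `r ≤ t` keeps both exponents nonnegative, which is what makes this hold also at `x = 0`.
  have hexp : x ^ ((t - k) / 2) ≤ x ^ ((t - r) / 2) := by
    apply rpow_le_rpow_of_exponent_ge' hx0 hx1 (by linarith)
    gcongr
  calc 1 / (q : ℝ) ^ k * q.choose k * a ^ k * x ^ ((t - k) / 2)
      ≤ 1 / k ! * a ^ k * x ^ ((t - r) / 2) := by
        gcongr
        exact one_div_pow_mul_choose_le_inv_factorial q k
    _ = a ^ k / k ! * x ^ ((t - r) / 2) := by ring

theorem sum_unique_colour_bound_general (q d r : ℕ) (hrd : r ≤ d)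
    (hq : Real.exp 1 * d ≤ q) :
    (∑ k ∈ Finset.range (r + 1),
        (1 / (q : ℝ) ^ k) * (q.choose k : ℝ) * (d : ℝ) ^ k *
          (Real.exp 1 * d / q) ^ (((d : ℝ) - k) / 2))
      ≤ Real.exp d * (Real.exp 1 * d / q) ^ (((d : ℝ) - r) / 2) := by
  set x := Real.exp 1 * d / q
  have hx0 : 0 ≤ x := by positivity
  have hx1 : x ≤ 1 := div_le_one_of_le₀ hq (Nat.cast_nonneg q)
  calc (∑ k ∈ range (r + 1), 1 / (q : ℝ) ^ k * q.choose k * d ^ k * x ^ ((d - k : ℝ) / 2))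
      ≤ ∑ k ∈ range (r + 1), (d : ℝ) ^ k / k ! * x ^ ((d - r : ℝ) / 2) :=
        sum_le_sum fun k hk => one_div_pow_mul_choose_mul_rpow_le hx0 hx1 (Nat.cast_nonneg d)
          (Nat.lt_succ_iff.mp (mem_range.mp hk)) (by exact_mod_cast hrd)
    _ = (∑ k ∈ range (r + 1), (d : ℝ) ^ k / k !) * x ^ ((d - r : ℝ) / 2) := by
        rw [sum_mul]
    _ ≤ Real.exp d * x ^ ((d - r : ℝ) / 2) := by
        gcongr
        exact sum_le_exp_of_nonneg (Nat.cast_nonneg d) _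

/-- For `r ≤ d ≤ q` (with `e d ≤ q`),
`∑_{k=0}^{r} (1/q^k) C(q,k) d^k (e d/q)^((d-k)/2) ≤ e^d (e d/q)^((d-r)/2)`. -/
theorem sum_unique_colour_bound (q d r : ℕ) (hrd : r ≤ d) (hdq : d ≤ q)
    (hq : Real.exp 1 * d ≤ q) (hq0 : 0 < q) :
    (∑ k ∈ Finset.range (r + 1),
        (1 / (q : ℝ) ^ k) * (q.choose k : ℝ) * (d : ℝ) ^ k *
          (Real.exp 1 * d / q) ^ (((d : ℝ) - k) / 2))
      ≤ Real.exp d * (Real.exp 1 * d / q) ^ (((d : ℝ) - r) / 2) :=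
  sum_unique_colour_bound_general q d r hrd hq
end

section
/- Let q, z be natural numbers with q ≥ 2z ≥ 2. The probability that 2z independent uniform random variables with values in {1,...,q} take at most z distinct values is at most z · (z e / q)^z. -/
open Finset Real

/-!
A function `Fin (2z) → Fin q` taking at most `z` values maps into some `z`-subset of `Fin q`, so
there are at most `C(q, z) z^(2z)` of them. With `C(q, z) ≤ (q e / z)^z` the probability is at
most `C(q, z) z^(2z) / q^(2z) ≤ (z e / q)^z`.
-/

theorem card_filter_card_image_le_le_choose_mul_pow {α β : Type*} [Fintype α] [Fintype β]
    [DecidableEq α] [DecidableEq β] {k : ℕ} (hk : k ≤ Fintype.card β) :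
    #{f : α → β | #(univ.image f) ≤ k} ≤ (Fintype.card β).choose k * k ^ Fintype.card α := by
  have hcover : ({f : α → β | #(univ.image f) ≤ k} : Finset (α → β)) ⊆
      (univ.powersetCard k).biUnion fun S => Fintype.piFinset fun _ : α => S := by
    intro f hf
    obtain ⟨S, hfS, -, hS⟩ :=
      exists_subsuperset_card_eq (subset_univ _) (mem_filter.1 hf).2 (by rwa [card_univ])
    exact mem_biUnion.2 ⟨S, mem_powersetCard.2 ⟨subset_univ S, hS⟩,
      Fintype.mem_piFinset.2 fun a => hfS (mem_image_of_mem f (mem_univ a))⟩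
  calc #{f : α → β | #(univ.image f) ≤ k}
      ≤ ∑ S ∈ univ.powersetCard k, #(Fintype.piFinset fun _ : α => S) :=
        (card_le_card hcover).trans card_biUnion_le
    _ = (Fintype.card β).choose k * k ^ Fintype.card α := by
        rw [sum_congr rfl fun S hS => by
          rw [Fintype.card_piFinset, prod_const, (mem_powersetCard.1 hS).2, card_univ],
          sum_const, card_powersetCard, card_univ, smul_eq_mul]

theorem pow_le_factorial_mul_exp (n : ℕ) : (n : ℝ) ^ n ≤ n.factorial * exp n := by
  have h := pow_div_factorial_le_exp (x := (n : ℝ)) (Nat.cast_nonneg n) n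
  rwa [div_le_iff₀ (by positivity), mul_comm] at h

theorem choose_le_mul_exp_one_div_pow (n k : ℕ) :
    (n.choose k : ℝ) ≤ (n * exp 1 / k) ^ k := by
  have hk : (0 : ℝ) < (k : ℝ) ^ k := by exact_mod_cast Nat.pow_self_pos
  calc (n.choose k : ℝ) ≤ (n : ℝ) ^ k / k.factorial := Nat.choose_le_pow_div k n
    _ ≤ (n : ℝ) ^ k * exp k / (k : ℝ) ^ k := by
        rw [div_le_div_iff₀ (by positivity) hk, mul_assoc, mul_comm (exp _)]
        gcongr
        exact pow_le_factorial_mul_exp k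
    _ = (n * exp 1 / k) ^ k := by
        rw [div_pow, mul_pow, ← exp_nat_mul, mul_one]

/-- For `q ≥ 2z ≥ 2`, the probability that `2z` independent uniform random variables
with values in `{1,…,q}` take at most `z` distinct values is at most `z (z e / q)^z`. -/
theorem prob_few_distinct_values (q z : ℕ) (hz : 1 ≤ z) (hq : 2 * z ≤ q) :
    ((Finset.univ.filter (fun f : Fin (2 * z) → Fin q =>
        (Finset.univ.image f).card ≤ z)).card : ℝ) / (q : ℝ) ^ (2 * z)
      ≤ (z : ℝ) * ((z : ℝ) * Real.exp 1 / q) ^ z := by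
  have hcount := card_filter_card_image_le_le_choose_mul_pow (α := Fin (2 * z))
    (β := Fin q) (k := z) (by rw [Fintype.card_fin]; omega)
  rw [Fintype.card_fin, Fintype.card_fin] at hcount
  calc _ ≤ (q.choose z : ℝ) * (z : ℝ) ^ (2 * z) / (q : ℝ) ^ (2 * z) := by
        gcongr
        exact_mod_cast hcount
    _ ≤ (q * exp 1 / z) ^ z * (z : ℝ) ^ (2 * z) / (q : ℝ) ^ (2 * z) := by
        gcongr
        exact choose_le_mul_exp_one_div_pow q z
    _ = ((z : ℝ) * exp 1 / q) ^ z := by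
        rw [div_pow, div_pow, mul_pow, mul_pow, two_mul, pow_add, pow_add]
        field_simp
    _ ≤ (z : ℝ) * ((z : ℝ) * exp 1 / q) ^ z :=
        le_mul_of_one_le_left (by positivity) (by exact_mod_cast hz)
end

section
/- Let A₁,...,A_t be events in a probability space with dependency graph Γ (each A_i independent of the collection of A_j with (i,j) not an edge of Γ). If there exist reals 0 ≤ y(i) < 1 with P(A_i) ≤ y(i) · ∏_{(i,j) ∈ E(Γ)} (1 - y(j)) for every i, then P(⋂_i A_iᶜ) ≥ ∏_i (1 - y(i)) > 0. -/
/-!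
Write `C S` for the event that no `A j` with `j ∈ S` occurs. By strong induction on `S` one shows
`P(A i ∩ C S) ≤ y i · P(C S)` for `i ∉ S`: split `S` into the neighbours `N` and non-neighbours `F`
of `i`. Independence bounds the left side by `P(A i) · P(C F)`, while peeling the events of `N`
off `C F` one at a time, each step controlled by the induction hypothesis, gives
`∏_{j ∈ N} (1 - y j) · P(C F) ≤ P(C S)`. The same peeling over all indices then yields
`∏ (1 - y i) ≤ P(C univ)`. Stating the bounds multiplicatively rather than through conditional
probabilities `P(A i | C S)` removes any need for `P(C S) > 0` during the induction.
-/

open MeasureTheory ProbabilityTheory Set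

namespace ProbabilityTheory

variable {Ω : Type*} {m₁ m₂ : MeasurableSpace Ω} [MeasurableSpace Ω] {μ : Measure Ω}

lemma Indep.measureReal_inter {s t : Set Ω} (h : Indep m₁ m₂ μ) (hs : MeasurableSet[m₁] s)
    (ht : MeasurableSet[m₂] t) : μ.real (s ∩ t) = μ.real s * μ.real t := by
  simp only [measureReal_def, (Indep_iff _ _ _).1 h s t hs ht, ENNReal.toReal_mul]

end ProbabilityTheory

namespace MeasureTheory

variable {Ω ι : Type*} [MeasurableSpace Ω] {μ : Measure Ω} [IsFiniteMeasure μ]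

lemma one_sub_mul_measureReal_le_measureReal_compl_inter {s t : Set Ω} {y : ℝ}
    (hs : MeasurableSet s) (h : μ.real (s ∩ t) ≤ y * μ.real t) :
    (1 - y) * μ.real t ≤ μ.real (sᶜ ∩ t) := by
  have hsplit := measureReal_inter_add_sdiff (μ := μ) (s := t) hs
  rw [inter_comm, sdiff_eq_compl_inter] at hsplit
  linarith

variable {A : ι → Set Ω} {y : ι → ℝ}

lemma prod_one_sub_mul_le_measureReal_biInter_compl_inter [DecidableEq ι] {T : Finset ι}
    {B : Set Ω} (hA : ∀ j ∈ T, MeasurableSet (A j)) (hy : ∀ j ∈ T, y j ≤ 1)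
    (h : ∀ a ∈ T, ∀ U ⊆ T, a ∉ U →
      μ.real (A a ∩ ((⋂ j ∈ U, (A j)ᶜ) ∩ B)) ≤ y a * μ.real ((⋂ j ∈ U, (A j)ᶜ) ∩ B)) :
    (∏ j ∈ T, (1 - y j)) * μ.real B ≤ μ.real ((⋂ j ∈ T, (A j)ᶜ) ∩ B) := by
  induction T using Finset.induction_on with
  | empty => simp
  | insert a T ha ih =>
    have haT := Finset.mem_insert_self a T
    have hTa := Finset.subset_insert a T
    have ih' := ih (fun j hj => hA j (hTa hj)) (fun j hj => hy j (hTa hj))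
      fun b hb U hU => h b (hTa hb) U (hU.trans hTa)
    have hpeel := one_sub_mul_measureReal_le_measureReal_compl_inter (hA a haT) (h a haT T hTa ha)
    rw [Finset.prod_insert ha, Finset.set_biInter_insert, inter_assoc, mul_assoc]
    exact (mul_le_mul_of_nonneg_left ih' (sub_nonneg.2 (hy a haT))).trans hpeel

variable [Fintype ι] (Γ : SimpleGraph ι) [DecidableRel Γ.Adj]

theorem measureReal_inter_biInter_compl_le (hA : ∀ i, MeasurableSet (A i))
    (hIndep : ∀ i (S : Finset ι), i ∉ S → (∀ j ∈ S, ¬Γ.Adj i j) →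
      μ.real (A i ∩ ⋂ j ∈ S, (A j)ᶜ) = μ.real (A i) * μ.real (⋂ j ∈ S, (A j)ᶜ))
    (hy0 : ∀ i, 0 ≤ y i) (hy1 : ∀ i, y i ≤ 1)
    (hP : ∀ i, μ.real (A i) ≤ y i * ∏ j ∈ Finset.univ.filter (Γ.Adj i), (1 - y j))
    (S : Finset ι) {i : ι} (hi : i ∉ S) :
    μ.real (A i ∩ ⋂ j ∈ S, (A j)ᶜ) ≤ y i * μ.real (⋂ j ∈ S, (A j)ᶜ) := by
  classical
  induction S using Finset.strongInduction generalizing i with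
  | H S ih =>
  set N := S.filter (Γ.Adj i)
  set F := S.filter (fun j => ¬Γ.Adj i j)
  have hCS : ⋂ j ∈ S, (A j)ᶜ = (⋂ j ∈ N, (A j)ᶜ) ∩ ⋂ j ∈ F, (A j)ᶜ := by
    rw [← Finset.set_biInter_inter, Finset.filter_union_filter_not_eq]
  have hNeighbours : ∏ j ∈ Finset.univ.filter (Γ.Adj i), (1 - y j) ≤ ∏ j ∈ N, (1 - y j) :=
    Finset.prod_le_prod_of_subset_of_le_one (Finset.filter_subset_filter _ (Finset.subset_univ S))
      (fun j _ => sub_nonneg.2 (hy1 j)) (fun j _ _ => by linarith [hy0 j])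
  have hPeel : (∏ j ∈ N, (1 - y j)) * μ.real (⋂ j ∈ F, (A j)ᶜ) ≤ μ.real (⋂ j ∈ S, (A j)ᶜ) := by
    rw [hCS]
    refine prod_one_sub_mul_le_measureReal_biInter_compl_inter (fun j _ => hA j)
      (fun j _ => hy1 j) fun a ha U hU haU => ?_
    rw [← Finset.set_biInter_inter]
    have haF : a ∉ F := fun h => (Finset.mem_filter.1 h).2 (Finset.mem_filter.1 ha).2
    refine ih _ ((Finset.ssubset_iff_of_subset ?_).2 ⟨a, (Finset.mem_filter.1 ha).1, ?_⟩) ?_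
    · exact Finset.union_subset (hU.trans (Finset.filter_subset _ _)) (Finset.filter_subset _ _)
    all_goals simp [haU, haF]
  calc μ.real (A i ∩ ⋂ j ∈ S, (A j)ᶜ) ≤ μ.real (A i ∩ ⋂ j ∈ F, (A j)ᶜ) :=
        measureReal_mono (by rw [hCS]; exact inter_subset_inter_right _ inter_subset_right)
    _ = μ.real (A i) * μ.real (⋂ j ∈ F, (A j)ᶜ) :=
        hIndep i F (fun h => hi (Finset.mem_filter.1 h).1) fun j hj => (Finset.mem_filter.1 hj).2
    _ ≤ y i * (∏ j ∈ N, (1 - y j)) * μ.real (⋂ j ∈ F, (A j)ᶜ) := by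
        gcongr
        exact (hP i).trans (mul_le_mul_of_nonneg_left hNeighbours (hy0 i))
    _ ≤ y i * μ.real (⋂ j ∈ S, (A j)ᶜ) := by
        rw [mul_assoc]
        exact mul_le_mul_of_nonneg_left hPeel (hy0 i)

end MeasureTheory

/-- The asymmetric Lovász Local Lemma: if each event `A i` is (mutually) independent
of the family of events `A j` over non-neighbours `j` in the dependency graph `Γ`,
and `P(A i) ≤ y i · ∏_{Γ.Adj i j} (1 - y j)` with `0 ≤ y i < 1`, then
`P(⋂ i, (A i)ᶜ) ≥ ∏ i (1 - y i) > 0`. -/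
theorem lovasz_local_lemma {Ω : Type*} [MeasurableSpace Ω] (μ : Measure Ω)
    [IsProbabilityMeasure μ] (t : ℕ) (A : Fin t → Set Ω)
    (hA : ∀ i, MeasurableSet (A i)) (Γ : SimpleGraph (Fin t)) [DecidableRel Γ.Adj]
    (hIndep : ∀ i : Fin t,
      ProbabilityTheory.Indep (MeasurableSpace.generateFrom {A i})
        (MeasurableSpace.generateFrom {s | ∃ j : Fin t, j ≠ i ∧ ¬Γ.Adj i j ∧ s = A j}) μ)
    (y : Fin t → ℝ) (hy0 : ∀ i, 0 ≤ y i) (hy1 : ∀ i, y i < 1)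
    (hP : ∀ i, (μ (A i)).toReal ≤
      y i * ∏ j ∈ Finset.univ.filter (fun j => Γ.Adj i j), (1 - y j)) :
    (∏ i : Fin t, (1 - y i)) ≤ (μ (⋂ i, (A i)ᶜ)).toReal ∧
      0 < ∏ i : Fin t, (1 - y i) := by
  have hy1' : ∀ i, y i ≤ 1 := fun i => (hy1 i).le
  have hFactor : ∀ i (S : Finset (Fin t)), i ∉ S → (∀ j ∈ S, ¬Γ.Adj i j) →
      μ.real (A i ∩ ⋂ j ∈ S, (A j)ᶜ) = μ.real (A i) * μ.real (⋂ j ∈ S, (A j)ᶜ) := by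
    intro i S hi hS
    refine (hIndep i).measureReal_inter (MeasurableSpace.measurableSet_generateFrom rfl)
      (Finset.measurableSet_biInter _ fun j hj => MeasurableSet.compl ?_)
    exact MeasurableSpace.measurableSet_generateFrom ⟨j, fun h => hi (h ▸ hj), hS j hj, rfl⟩
  have hAvoid := prod_one_sub_mul_le_measureReal_biInter_compl_inter (μ := μ) (B := Set.univ)
    (T := Finset.univ) (fun j _ => hA j) (fun j _ => hy1' j) fun a _ U _ ha => by
      simpa using measureReal_inter_biInter_compl_le Γ hA hFactor hy0 hy1' hP U ha
  exact ⟨by simpa [Measure.real] using hAvoid, Finset.prod_pos fun i _ => sub_pos.2 (hy1 i)⟩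
end

section
/- For natural numbers n ≥ 2 and q, d, r with (1-ε) n p ≤ d ≤ 2 n p, r ≤ θ n p, q = D n p, ε + θ < 1, and 2e/D ≤ e^{-6/(1-ε-θ)}: the quantity d · e^d · (e d / q)^{(d-r)/2} is at most e^{-n p} for all sufficiently large n p. -/
/-!
Write `x = np`, `c = 1 - ε - θ` and `β = 6 / c`. Since `d ≤ 2x` and `q = Dx`, the base
`e d / q` is at most `2e / D ≤ e^{-β}`, and the exponent `(d - r) / 2` is nonnegative, so the
power is at most `e^{-β (d - r) / 2}`. The lower bound on `d` and the upper bound on `r` make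
`d - β (d - r) / 2 ≤ -2x`, and together with `d ≤ 2x ≤ e^x` this gives `e^{x - 2x} = e^{-x}`,
for every `np > 0`.
-/

open Real

lemma rpow_le_exp_mul_of_le_exp {b a y : ℝ} (hb : 0 ≤ b) (hba : b ≤ exp a) (hy : 0 ≤ y) :
    b ^ y ≤ exp (a * y) := by
  rw [exp_mul]
  exact rpow_le_rpow hb hba hy

lemma div_mul_le_two_div {a d D x : ℝ} (ha : 0 ≤ a) (hD : 0 < D) (hx : 0 < x)
    (hd : d ≤ 2 * x) : a * d / (D * x) ≤ 2 * a / D := by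
  rw [div_le_div_iff₀ (by positivity) hD]
  nlinarith [mul_le_mul_of_nonneg_left hd (mul_nonneg ha hD.le)]

lemma sub_six_div_mul_half_sub_le {ε θ x d r : ℝ} (hε : 0 ≤ ε) (hθ : 0 ≤ θ)
    (hc : 0 < 1 - ε - θ) (hx : 0 ≤ x) (hd : (1 - ε) * x ≤ d) (hr : r ≤ θ * x) :
    d - 6 / (1 - ε - θ) * ((d - r) / 2) ≤ -(2 * x) := by
  have hsplit : 6 / (1 - ε - θ) * ((d - r) / 2) = 3 * (d - r) / (1 - ε - θ) := by ring
  rw [hsplit, sub_le_iff_le_add, ← sub_le_iff_le_add', sub_neg_eq_add, le_div_iff₀ hc]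
  -- `3(d - r) - c(d + 2x) = (3 - c)(d - (1 - ε)x) + ε c x + 3(θx - r)`
  nlinarith [mul_nonneg (by linarith : (0 : ℝ) ≤ 3 - (1 - ε - θ)) (sub_nonneg.2 hd),
    mul_nonneg (mul_nonneg hε hc.le) hx]

theorem probabilistic_step_bound_general (ε θ D : ℝ) (hε : 0 < ε)
    (hεθ : ε + θ < 1) (hD : 0 < D)
    (hDbig : 2 * Real.exp 1 / D ≤ Real.exp (-(6 / (1 - ε - θ)))) :
    ∃ N : ℝ, ∀ n p d q r : ℝ, 2 ≤ n → 0 < p →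
      (1 - ε) * n * p ≤ d → d ≤ 2 * n * p → 0 ≤ r → r ≤ θ * n * p → q = D * n * p →
      N ≤ n * p →
      d * Real.exp d * (Real.exp 1 * d / q) ^ ((d - r) / 2) ≤ Real.exp (-(n * p)) := by
  refine ⟨0, fun n p d q r hn hp hd₁ hd₂ hr₀ hr hq _ => ?_⟩
  rw [mul_assoc] at hd₁ hd₂ hr hq
  subst hq
  set x := n * p
  have hx : 0 < x := by positivity
  have hc : 0 < 1 - ε - θ := by linarith
  have hd : 0 < d := lt_of_lt_of_le (by nlinarith) hd₁
  have hθ : 0 ≤ θ := nonneg_of_mul_nonneg_left (hr₀.trans hr) hx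
  have hbase : exp 1 * d / (D * x) ≤ exp (-(6 / (1 - ε - θ))) :=
    (div_mul_le_two_div (exp_pos 1).le hD hx hd₂).trans hDbig
  have hy : 0 ≤ (d - r) / 2 := by nlinarith
  calc d * exp d * (exp 1 * d / (D * x)) ^ ((d - r) / 2)
      ≤ d * exp d * exp (-(6 / (1 - ε - θ)) * ((d - r) / 2)) := by
        gcongr
        exact rpow_le_exp_mul_of_le_exp (by positivity) hbase hy
    _ = d * exp (d - 6 / (1 - ε - θ) * ((d - r) / 2)) := by
        rw [mul_assoc, ← exp_add, neg_mul, ← sub_eq_add_neg]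
    _ ≤ exp x * exp (-(2 * x)) := by
        gcongr
        · exact hd₂.trans two_mul_le_exp
        · exact sub_six_div_mul_half_sub_le hε.le hθ hc hx.le hd₁ hr
    _ = exp (-x) := by rw [← exp_add]; ring_nf

/-- For `(1-ε)np ≤ d ≤ 2np`, `r ≤ θnp`, `q = Dnp` with `ε + θ < 1` and
`2e/D ≤ e^(-6/(1-ε-θ))`, the quantity `d e^d (e d / q)^((d-r)/2)` is at most
`e^(-np)` for all sufficiently large `np`. -/
theorem probabilistic_step_bound (ε θ D : ℝ) (hε : 0 < ε) (hθ : 0 < θ)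
    (hεθ : ε + θ < 1) (hD : 0 < D)
    (hDbig : 2 * Real.exp 1 / D ≤ Real.exp (-(6 / (1 - ε - θ)))) :
    ∃ N : ℝ, ∀ n p d q r : ℝ, 2 ≤ n → 0 < p →
      (1 - ε) * n * p ≤ d → d ≤ 2 * n * p → 0 ≤ r → r ≤ θ * n * p → q = D * n * p →
      N ≤ n * p →
      d * Real.exp d * (Real.exp 1 * d / q) ^ ((d - r) / 2) ≤ Real.exp (-(n * p)) :=
  probabilistic_step_bound_general ε θ D hε hεθ hD hDbig
end
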